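/- Let f be a transcendental entire function on ℂ and let P and Q be polynomials such that P − Q is nonconstant. Then the entire functions f + P and f + Q are algebraically independent over ℂ. -/

import Mathlib

open MeasureTheory Filter Asymptotics

/-- `log⁺ x = max (log x) 0`. -/
noncomputable def logPlus (x : ℝ) : ℝ := max (Real.log x) 0

/-- The Nevanlinna proximity function `m(r, f)`. -/
noncomputable def proximity (f : ℂ → ℂ) (r : ℝ) : ℝ :=
  (1 / (2 * Real.pi)) *
    ∫ θ in (0:ℝ)..(2 * Real.pi), logPlus ‖f ((r : ℂ) * Complex.exp ((θ : ℂ) * Complex.I))‖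

/-- The normalized spherical area `A(t)` covered by `f` over the disc of radius `t`. -/
noncomputable def sphericalArea (f : ℂ → ℂ) (t : ℝ) : ℝ :=
  (1 / Real.pi) * ∫ z in Metric.ball (0 : ℂ) t, ‖deriv f z‖ ^ 2 / (1 + ‖f z‖ ^ 2) ^ 2

/-- The (Ahlfors–Shimizu) Nevanlinna characteristic function `T(r, f)`; it agrees with the
classical Nevanlinna characteristic up to a bounded term. -/
noncomputable def nevT (f : ℂ → ℂ) (r : ℝ) : ℝ :=
  ∫ t in (0:ℝ)..r, sphericalArea f t / t

/-- `SmallO A B` means `A(r) = o(B(r))` as `r → ∞` outside a possible exceptional set of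
finite Lebesgue measure; `SmallO A (nevT f)` is the meaning of `A(r) = S(r, f)`. -/
def SmallO (A B : ℝ → ℝ) : Prop :=
  ∃ E : Set ℝ, MeasurableSet E ∧ volume E < ⊤ ∧
    ∀ ε : ℝ, 0 < ε → ∀ᶠ r in atTop, r ∉ E → |A r| ≤ ε * B r

/-- The order `ρ(f) = limsup_{r→∞} log T(r,f) / log r`, as an extended real. -/
noncomputable def nevOrder (f : ℂ → ℂ) : EReal :=
  Filter.limsup (fun r : ℝ => ((Real.log (nevT f r) / Real.log r : ℝ) : EReal)) Filter.atTop

/-- The Nevanlinna deficiency `δ(0, f) = liminf_{r→∞} m(r, 1/f) / T(r, f)`. -/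
noncomputable def deficiency0 (f : ℂ → ℂ) : ℝ :=
  Filter.liminf (fun r : ℝ => proximity (fun z => (f z)⁻¹) r / nevT f r) Filter.atTop

/-- A family of functions `ℂ → ℂ` is algebraically independent over `ℂ` if no nonzero
polynomial with constant coefficients annihilates it. -/
def AlgIndepFns {σ : Type} (g : σ → ℂ → ℂ) : Prop :=
  ∀ P : MvPolynomial σ ℂ, (∀ z, MvPolynomial.eval (fun i => g i z) P = 0) → P = 0

/-- A transcendental entire function: entire and not a polynomial. -/
def TranscEntire (f : ℂ → ℂ) : Prop :=
  Differentiable ℂ f ∧ ¬ ∃ p : Polynomial ℂ, ∀ z, f z = p.eval z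

/-- `f` is a rational function (away from the zeros of the denominator). -/
def IsRationalFn (f : ℂ → ℂ) : Prop :=
  ∃ p q : Polynomial ℂ, q ≠ 0 ∧ ∀ z, q.eval z ≠ 0 → f z = p.eval z / q.eval z

/-- A transcendental meromorphic function on `ℂ`: meromorphic and not rational. -/
def TranscMeromorphic (f : ℂ → ℂ) : Prop :=
  MeromorphicOn f Set.univ ∧ ¬ IsRationalFn f

/-
If `R (f + P, f + Q) = 0` with `R ≠ 0`, then `g = f + P` is a root of `w ↦ S (z, w)`, where
`S (z, w) = R (w, w - D z)` and `D = P - Q`; `S ≠ 0` because the nonconstant polynomial `D` maps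
`ℂ` onto `ℂ`. Cauchy's bound on the roots of `S (z, ·)`, whose leading coefficient stays away from
`0` for large `z`, gives `g z = O(z ^ M)`, and Cauchy's estimates for the Taylor coefficients of the
entire function `g` then make `g`, hence `f`, a polynomial.
-/

open Polynomial Bornology Asymptotics Filter Finset
open scoped Nat

theorem Differentiable.iteratedDeriv_eq_zero_of_isBigO_pow {g : ℂ → ℂ} (hg : Differentiable ℂ g)
    {M : ℕ} (hgM : g =O[cobounded ℂ] (· ^ M)) {n : ℕ} (hn : M < n) :
    iteratedDeriv n g 0 = 0 := by
  obtain ⟨B, hB⟩ := hgM.bound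
  obtain ⟨R₀, hR₀⟩ : ∃ R₀, ∀ r ≥ R₀, ∀ z : ℂ, ‖z‖ = r → ‖g z‖ ≤ B * ‖z ^ M‖ := by
    rw [← comap_norm_atTop, eventually_comap] at hB
    exact eventually_atTop.mp hB
  have hle : ∀ R ≥ max R₀ 1, ‖iteratedDeriv n g 0‖ ≤ n ! * B / R ^ (n - M) := by
    intro R hR
    have hR0 : 0 < R := by linarith [le_max_right R₀ 1]
    calc ‖iteratedDeriv n g 0‖ ≤ n ! * (B * R ^ M) / R ^ n :=
          Complex.norm_iteratedDeriv_le_of_forall_mem_sphere_norm_le n hR0 hg.diffContOnCl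
            fun z hz => by
              have hz : ‖z‖ = R := by simpa using hz
              simpa [hz] using hR₀ R (le_of_max_le_left hR) z hz
      _ = n ! * B / R ^ (n - M) := by
          rw [← Nat.sub_add_cancel hn.le, pow_add, Nat.add_sub_cancel]
          field_simp
  have hlim : Tendsto (fun R : ℝ => n ! * B / R ^ (n - M)) atTop (nhds 0) :=
    tendsto_const_nhds.div_atTop (tendsto_pow_atTop (by omega))
  exact norm_le_zero_iff.mp (ge_of_tendsto hlim (eventually_atTop.mpr ⟨_, hle⟩))

theorem Differentiable.exists_eq_eval_of_isBigO_pow {g : ℂ → ℂ} (hg : Differentiable ℂ g)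
    {M : ℕ} (hgM : g =O[cobounded ℂ] (· ^ M)) : ∃ p : ℂ[X], ∀ z, g z = p.eval z := by
  refine ⟨∑ n ∈ range (M + 1), C ((n ! : ℂ)⁻¹ * iteratedDeriv n g 0) * X ^ n, fun z => ?_⟩
  rw [← Complex.taylorSeries_eq_of_entire' (c := 0) (z := z) hg, tsum_eq_sum (s := range (M + 1))]
  · simp [eval_finsetSum]
  · intro n hn
    simp [hg.iteratedDeriv_eq_zero_of_isBigO_pow hgM (by simpa using hn)]

theorem Polynomial.IsRoot.norm_le_sum_norm_coeff_div_add_one {K : Type*} [NormedDivisionRing K]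
    {p : K[X]} (hp : p ≠ 0) {a : K} (h : p.IsRoot a) :
    ‖a‖ ≤ (∑ j ∈ range p.natDegree, ‖p.coeff j‖) / ‖p.leadingCoeff‖ + 1 := by
  have hsup : (range p.natDegree).sup (‖p.coeff ·‖₊) ≤ ∑ j ∈ range p.natDegree, ‖p.coeff j‖₊ :=
    Finset.sup_le fun j hj => single_le_sum (f := (‖p.coeff ·‖₊)) (by simp) hj
  have hcauchy := (h.norm_lt_cauchyBound hp).le
  rw [cauchyBound] at hcauchy
  simpa [← NNReal.coe_le_coe] using hcauchy.trans
    (by gcongr : _ ≤ (∑ j ∈ range p.natDegree, ‖p.coeff j‖₊) / ‖p.leadingCoeff‖₊ + 1)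

theorem Polynomial.isBigO_pow_of_isRoot_map_evalRingHom {K : Type*} [NormedField K]
    {S : K[X][X]} (hS : S ≠ 0) {g : K → K} (hroot : ∀ z, (S.map (evalRingHom z)).IsRoot (g z)) :
    ∃ M : ℕ, g =O[cobounded K] (· ^ M) := by
  set a := S.leadingCoeff
  set M := (range S.natDegree).sup fun j => (S.coeff j).natDegree
  have hcoeff : ∀ j ∈ range S.natDegree, (S.coeff j).eval =O[cobounded K] (· ^ M) := by
    intro j hj
    simpa using isBigO_cobounded_of_degree_le (R := K) (P := S.coeff j) (Q := X ^ M)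
      (by simpa using degree_le_of_natDegree_le (le_sup (f := fun j => (S.coeff j).natDegree) hj))
  have hlead : (fun _ => (1 : K)) =O[cobounded K] a.eval := by
    simpa using isBigO_cobounded_of_degree_le (R := K) (P := C 1) (Q := a)
      (by simpa using zero_le_degree_iff.mpr (leadingCoeff_ne_zero.mpr hS))
  have hinv : (fun z => (a.eval z)⁻¹) =O[cobounded K] (fun _ => (1 : K)) := by
    simpa using hlead.inv_rev (by simp)
  have hbound : ∀ᶠ z in cobounded K,
      ‖g z‖ ≤ ‖(∑ j ∈ range S.natDegree, ‖(S.coeff j).eval z‖) * ‖(a.eval z)⁻¹‖ + 1‖ := by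
    filter_upwards [hlead.eq_zero_imp] with z hz
    have ha : a.eval z ≠ 0 := fun h => one_ne_zero (hz h)
    have hlc : (S.map (evalRingHom z)).leadingCoeff = a.eval z :=
      leadingCoeff_map_of_leadingCoeff_ne_zero _ ha
    have hgz := (hroot z).norm_le_sum_norm_coeff_div_add_one (leadingCoeff_ne_zero.mp (hlc ▸ ha))
    rw [natDegree_map_of_leadingCoeff_ne_zero _ ha, hlc] at hgz
    simp only [coeff_map, coe_evalRingHom] at hgz
    rwa [Real.norm_of_nonneg (by positivity), norm_inv, ← div_eq_mul_inv]
  refine ⟨M, (IsBigO.of_bound' hbound).trans ?_⟩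
  refine IsBigO.add ?_
    (by simpa using (isBigO_pow_pow_cobounded_of_le (R := K) (Nat.zero_le M)).norm_left)
  simpa using (IsBigO.sum fun j hj => (hcoeff j hj).norm_left).mul hinv.norm_left

theorem Polynomial.eval_map_evalRingHom_aeval {K σ : Type*} [CommRing K] (v : σ → K[X][X])
    (R : MvPolynomial σ K) (z w : K) :
    ((MvPolynomial.aeval v R).map (evalRingHom z)).eval w
      = MvPolynomial.eval (fun i => ((v i).map (evalRingHom z)).eval w) R := by
  induction R using MvPolynomial.induction_on <;> simp_all

theorem Polynomial.algebraicIndependent_X_X_sub_C {K : Type*} [Field K] [IsAlgClosed K]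
    {D : K[X]} (hD : 0 < D.natDegree) : AlgebraicIndependent K ![(X : K[X][X]), X - C D] := by
  rw [AlgebraicIndependent, injective_iff_map_eq_zero]
  intro R hR
  refine MvPolynomial.funext fun x => ?_
  have hD' := natDegree_pos_iff_degree_pos.mp hD
  obtain ⟨z, hz⟩ :=
    IsAlgClosed.exists_root (D - C (x 0 - x 1)) (by rw [degree_sub_C hD']; exact hD'.ne')
  rw [IsRoot, eval_sub, eval_C, sub_eq_zero] at hz
  have hx : (fun i => ((![(X : K[X][X]), X - C D] i).map (evalRingHom z)).eval (x 0)) = x := by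
    ext i; fin_cases i <;> simp [hz]
  simpa [eval_map_evalRingHom_aeval, hx] using
    congrArg (fun S => (S.map (evalRingHom z)).eval (x 0)) hR

/-- Lemma 3.7: if `f` is transcendental entire and `P, Q` are polynomials with `P − Q`
nonconstant, then `f + P` and `f + Q` are algebraically independent over `ℂ`. -/
theorem stmt_18 (f : ℂ → ℂ) (hf : TranscEntire f) (P Q : Polynomial ℂ)
    (hPQ : 0 < (P - Q).natDegree) :
    AlgIndepFns ![fun z => f z + P.eval z, fun z => f z + Q.eval z] := by
  intro R hR
  by_contra hR0
  set S := MvPolynomial.aeval ![(X : ℂ[X][X]), X - C (P - Q)] R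
  have hS : S ≠ 0 := (map_ne_zero_iff _ (algebraicIndependent_X_X_sub_C hPQ)).mpr hR0
  have hroot : ∀ z, (S.map (evalRingHom z)).IsRoot (f z + P.eval z) := by
    intro z
    have hv : (fun i => ((![(X : ℂ[X][X]), X - C (P - Q)] i).map (evalRingHom z)).eval
        (f z + P.eval z)) = fun i => ![fun z => f z + P.eval z, fun z => f z + Q.eval z] i z := by
      ext i; fin_cases i <;> simp; ring
    rw [IsRoot, eval_map_evalRingHom_aeval, hv, hR z]
  obtain ⟨M, hM⟩ := isBigO_pow_of_isRoot_map_evalRingHom hS hroot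
  have hg : Differentiable ℂ fun z => f z + P.eval z := hf.1.add P.differentiable
  obtain ⟨p, hp⟩ := hg.exists_eq_eval_of_isBigO_pow hM
  exact hf.2 ⟨p - P, fun z => by rw [eval_sub, ← hp z, add_sub_cancel_right]⟩
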